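/- Let A and B be anti-Hermitian matrices and p a positive integer. Define R_p(A,B) = ∫₀¹∫₀^{s₁}⋯∫₀^{s_{p-1}} e^{A(1-s₁)} B e^{A(s₁-s₂)} B ⋯ e^{A(s_{p-1}-s_p)} B e^{(A+B)s_p} ds_p ⋯ ds₁. Then ‖R_p(A,B)‖ ≤ ‖B‖^p / p!. -/

import Mathlib

open scoped Matrix Matrix.Norms.L2Operator
open MeasureTheory NormedSpace

/-- The nested iterated integral from the high-order variation-of-parameters formula,
ending with the full propagator `e^{(A+B)s}`:
`G A B 0 t = e^{(A+B)t}` and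
`G A B (l+1) t = ∫₀ᵗ e^{A(t-s)} B (G A B l s) ds`, so that
`R_p(A,B) = G A B p 1` equals the `p`-fold iterated integral
`∫₀¹∫₀^{s₁}⋯∫₀^{s_{p-1}} e^{A(1-s₁)} B e^{A(s₁-s₂)} B ⋯ e^{A(s_{p-1}-s_p)} B e^{(A+B)s_p} ds_p⋯ds₁`. -/
noncomputable def remainderIntegral {N : ℕ} (A B : Matrix (Fin N) (Fin N) ℂ) :
    ℕ → ℝ → Matrix (Fin N) (Fin N) ℂ
  | 0, t => exp (t • (A + B))
  | (l + 1), t => ∫ s in (0:ℝ)..t, exp ((t - s) • A) * B * remainderIntegral A B l s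

/-! Each factor `e^{A(s_i - s_{i+1})}` and the final `e^{(A+B)s_p}` is unitary, so only the
`p` factors `B` contribute to the norm, and what remains is the volume `tᵖ/p!` of the simplex
`t ≥ s₁ ≥ ⋯ ≥ s_p ≥ 0`, computed one integral at a time. -/

theorem CStarRing.norm_le_one_of_mem_unitary {E : Type*} [NormedRing E] [StarRing E]
    [CStarRing E] {U : E} (hU : U ∈ unitary E) : ‖U‖ ≤ 1 := by
  rcases subsingleton_or_nontrivial E with _ | _
  · simp [Subsingleton.elim U 0]
  · exact (CStarRing.norm_of_mem_unitary hU).le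

theorem integral_pow_div_factorial (t : ℝ) (l : ℕ) :
    ∫ s in (0:ℝ)..t, s ^ l / l.factorial = t ^ (l + 1) / (l + 1).factorial := by
  rw [intervalIntegral.integral_div, integral_pow, Nat.factorial_succ]
  push_cast
  field_simp
  ring

theorem norm_integral_le_mul_pow_div_factorial {E : Type*} [NormedAddCommGroup E]
    [NormedSpace ℝ E] {f : ℝ → E} {C t : ℝ} {l : ℕ} (ht : 0 ≤ t)
    (hf : ∀ s ∈ Set.Ioc 0 t, ‖f s‖ ≤ C * (s ^ l / l.factorial)) :
    ‖∫ s in (0:ℝ)..t, f s‖ ≤ C * (t ^ (l + 1) / (l + 1).factorial) := by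
  calc ‖∫ s in (0:ℝ)..t, f s‖ ≤ ∫ s in (0:ℝ)..t, C * (s ^ l / l.factorial) :=
        intervalIntegral.norm_integral_le_of_norm_le ht (.of_forall hf)
          ((by fun_prop : Continuous fun s : ℝ ↦ C * (s ^ l / l.factorial)).intervalIntegrable _ _)
    _ = C * (t ^ (l + 1) / (l + 1).factorial) := by
        rw [intervalIntegral.integral_const_mul, integral_pow_div_factorial]

theorem norm_remainderIntegral_le {N : ℕ} {A B : Matrix (Fin N) (Fin N) ℂ}
    (hA : Aᴴ = -A) (hB : Bᴴ = -B) (l : ℕ) {t : ℝ} (ht : 0 ≤ t) :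
    ‖remainderIntegral A B l t‖ ≤ ‖B‖ ^ l * (t ^ l / l.factorial) := by
  -- The unitarity of `exp` is stated for `ℚ`-normed algebras; the L2 operator norm only
  -- provides the `ℂ`-structure.
  let +nondep : NormedAlgebra ℚ (Matrix (Fin N) (Fin N) ℂ) := .restrictScalars ℚ ℂ _
  have hA_skew : A ∈ skewAdjoint (Matrix (Fin N) (Fin N) ℂ) := hA
  have hAB : A + B ∈ skewAdjoint (Matrix (Fin N) (Fin N) ℂ) := add_mem hA_skew hB
  induction l generalizing t with
  | zero =>
    simpa [remainderIntegral] using CStarRing.norm_le_one_of_mem_unitary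
      (exp_mem_unitary_of_mem_skewAdjoint (skewAdjoint.smul_mem t hAB))
  | succ l ih =>
    rw [remainderIntegral, pow_succ']
    refine norm_integral_le_mul_pow_div_factorial ht fun s hs ↦ ?_
    have hU := exp_mem_unitary_of_mem_skewAdjoint (skewAdjoint.smul_mem (t - s) hA_skew)
    calc ‖exp ((t - s) • A) * B * remainderIntegral A B l s‖
        = ‖B * remainderIntegral A B l s‖ := by rw [mul_assoc, CStarRing.norm_mem_unitary_mul _ hU]
      _ ≤ ‖B‖ * ‖remainderIntegral A B l s‖ := norm_mul_le _ _
      _ ≤ ‖B‖ * (‖B‖ ^ l * (s ^ l / l.factorial)) := by gcongr; exact ih hs.1.le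
      _ = ‖B‖ * ‖B‖ ^ l * (s ^ l / l.factorial) := by ring

theorem remainder_bound_general {N : ℕ} (A B : Matrix (Fin N) (Fin N) ℂ)
    (hA : Aᴴ = -A) (hB : Bᴴ = -B) (p : ℕ) :
    ‖remainderIntegral A B p 1‖ ≤ ‖B‖ ^ p / (Nat.factorial p) := by
  simpa only [one_pow, mul_one_div] using norm_remainderIntegral_le hA hB p zero_le_one

/-- If `A` and `B` are anti-Hermitian, then the remainder
`R_p(A,B) = ∫₀¹∫₀^{s₁}⋯∫₀^{s_{p-1}} e^{A(1-s₁)} B e^{A(s₁-s₂)} B ⋯ e^{A(s_{p-1}-s_p)} B e^{(A+B)s_p} ds_p⋯ds₁`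
satisfies `‖R_p(A,B)‖ ≤ ‖B‖^p / p!` in the spectral norm. -/
theorem remainder_bound {N : ℕ} (A B : Matrix (Fin N) (Fin N) ℂ)
    (hA : Aᴴ = -A) (hB : Bᴴ = -B) (p : ℕ) (hp : 1 ≤ p) :
    ‖remainderIntegral A B p 1‖ ≤ ‖B‖ ^ p / (Nat.factorial p) :=
  remainder_bound_general A B hA hB p
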